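/- arXiv:2311.05369 — 3 statements merged into one kernel-verified Lean document; each statement's English description precedes it below -/
import Mathlib

section
/- For positive integers a_1,...,a_n and b_1,...,b_m, the greatest common divisor of the products satisfies gcd(a_1⋯a_n, b_1⋯b_m) ≤ ∏_{i=1}^{n} ∏_{j=1}^{m} gcd(a_i, b_j). -/
/-! Iterating `gcd k (m * n) ∣ gcd k m * gcd k n` in each argument gives the divisibility
`gcd (∏ aᵢ) (∏ bⱼ) ∣ ∏ᵢ ∏ⱼ gcd aᵢ bⱼ` in any GCD monoid; over `ℕ` the right-hand side is positive,
so divisibility gives the inequality. -/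

open Finset

section GCDMonoid

variable {α ι κ : Type*} [CommMonoidWithZero α] [GCDMonoid α]

theorem gcd_prod_right_dvd_prod_gcd (k : α) (s : Finset ι) (f : ι → α) :
    gcd k (∏ j ∈ s, f j) ∣ ∏ j ∈ s, gcd k (f j) := by
  classical
  induction s using Finset.induction with
  | empty => simp
  | insert j s hj ih =>
    rw [prod_insert hj, prod_insert hj]
    exact (gcd_mul_dvd_mul_gcd _ _ _).trans (mul_dvd_mul_left _ ih)

theorem gcd_prod_left_dvd_prod_gcd (s : Finset ι) (f : ι → α) (k : α) :
    gcd (∏ i ∈ s, f i) k ∣ ∏ i ∈ s, gcd (f i) k :=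
  (gcd_comm' _ _).dvd.trans <| (gcd_prod_right_dvd_prod_gcd k s f).trans <|
    prod_dvd_prod_of_dvd _ _ fun _ _ => (gcd_comm' _ _).dvd

theorem gcd_prod_dvd_prod_prod_gcd (s : Finset ι) (t : Finset κ) (f : ι → α) (g : κ → α) :
    gcd (∏ i ∈ s, f i) (∏ j ∈ t, g j) ∣ ∏ i ∈ s, ∏ j ∈ t, gcd (f i) (g j) :=
  (gcd_prod_left_dvd_prod_gcd s f _).trans <|
    prod_dvd_prod_of_dvd _ _ fun i _ => gcd_prod_right_dvd_prod_gcd (f i) t g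

end GCDMonoid

theorem gcd_prod_le_prod_gcd_general (n m : ℕ) (a : Fin n → ℕ) (b : Fin m → ℕ)
    (ha : ∀ i, 0 < a i) :
    Nat.gcd (∏ i, a i) (∏ j, b j) ≤ ∏ i, ∏ j, Nat.gcd (a i) (b j) := by
  have hpos : 0 < ∏ i, ∏ j, Nat.gcd (a i) (b j) :=
    prod_pos fun i _ => prod_pos fun j _ => Nat.gcd_pos_of_pos_left _ (ha i)
  exact Nat.le_of_dvd hpos (gcd_prod_dvd_prod_prod_gcd univ univ a b)

theorem gcd_prod_le_prod_gcd (n m : ℕ) (a : Fin n → ℕ) (b : Fin m → ℕ)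
    (ha : ∀ i, 0 < a i) (hb : ∀ j, 0 < b j) :
    Nat.gcd (∏ i, a i) (∏ j, b j) ≤ ∏ i, ∏ j, Nat.gcd (a i) (b j) :=
  gcd_prod_le_prod_gcd_general n m a b ha
end

section
/- Let U_n = (U_{n,1},...,U_{n,s}) be uniformly distributed on {1,...,n}^s with s ≥ 2. Then for each fixed j ∈ ℕ, the probability that gcd(U_{n,1},...,U_{n,s}) = j converges, as n → ∞, to 1/(ζ(s)·j^s). -/
/-!
Dividing by `j` maps the tuples in `{1,…,n}^s` with gcd `j` bijectively onto the coprime tuples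
in `{1,…,m}^s`, `m = ⌊n/j⌋`. Möbius inversion counts the latter as `∑_{d ≤ m} μ(d) ⌊m/d⌋^s`;
after dividing by `m^s`, the `d`-th term tends to `μ(d)/d^s` and is bounded by `1/d^s`, so by
Tannery's theorem the proportion tends to `∑ μ(d)/d^s = 1/ζ(s)`. The rescaling contributes the
factor `(⌊n/j⌋/n)^s → j^{-s}`.
-/

open Filter Finset ArithmeticFunction
open scoped Topology LSeries.notation ArithmeticFunction.Moebius ArithmeticFunction.zeta

theorem sum_divisors_moebius (n : ℕ) : ∑ d ∈ n.divisors, μ d = if n = 1 then 1 else 0 := by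
  have h := congr($moebius_mul_coe_zeta n)
  rwa [coe_mul_zeta_apply, one_apply] at h

theorem LSeries_moebius_eq_inv_riemannZeta {s : ℂ} (hs : 1 < s.re) :
    L ↗μ s = (riemannZeta s)⁻¹ :=
  (eq_inv_of_mul_eq_one_right <|
    LSeries_zeta_eq_riemannZeta hs ▸ LSeries_zeta_mul_Lseries_moebius hs)

theorem natCast_div_div_le_one_div (m d : ℕ) : ((m / d : ℕ) : ℝ) / m ≤ 1 / d := by
  rcases eq_or_ne m 0 with rfl | hm
  · simp
  calc ((m / d : ℕ) : ℝ) / m ≤ (m / d : ℝ) / m := by gcongr; exact Nat.cast_div_le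
    _ = 1 / d := by field_simp

theorem tendsto_natCast_div_div (d : ℕ) :
    Tendsto (fun m : ℕ => ((m / d : ℕ) : ℝ) / m) atTop (𝓝 (1 / d)) := by
  refine ((tendsto_nat_floor_mul_div_atTop (by positivity : (0 : ℝ) ≤ 1 / d)).comp
    tendsto_natCast_atTop_atTop).congr fun m => ?_
  simp only [Function.comp_apply, one_div_mul_eq_div, Nat.floor_div_eq_div]

section

variable {ι : Type*} [Fintype ι] [DecidableEq ι]

variable (ι) in
def gcdCount (n j : ℕ) : ℕ :=
  #{x ∈ Fintype.piFinset fun _ : ι => Icc 1 n | univ.gcd x = j}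

theorem card_filter_forall_dvd_piFinset_Icc (m d : ℕ) :
    #{x ∈ Fintype.piFinset fun _ : ι => Icc 1 m | ∀ i, d ∣ x i} = (m / d) ^ Fintype.card ι := by
  have : {x ∈ Fintype.piFinset fun _ : ι => Icc 1 m | ∀ i, d ∣ x i} =
      Fintype.piFinset fun _ => {k ∈ Icc 1 m | d ∣ k} := by
    ext x
    simp [forall_and]
  rw [this, Fintype.card_piFinset, prod_const, card_univ, ← Nat.Ioc_filter_dvd_card_eq_div]
  rfl

theorem gcd_mem_Icc_of_mem_piFinset [Nonempty ι] {m : ℕ} {x : ι → ℕ}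
    (hx : x ∈ Fintype.piFinset fun _ => Icc 1 m) : univ.gcd x ∈ Icc 1 m := by
  obtain ⟨i⟩ := ‹Nonempty ι›
  have hxi := mem_Icc.mp (Fintype.mem_piFinset.mp hx i)
  have hle : univ.gcd x ≤ x i := Nat.le_of_dvd (by omega) (gcd_dvd (mem_univ i))
  have hne : univ.gcd x ≠ 0 := fun h => by
    have := gcd_eq_zero_iff.mp h i (mem_univ i)
    omega
  exact mem_Icc.mpr ⟨Nat.one_le_iff_ne_zero.mpr hne, hle.trans hxi.2⟩

theorem gcdCount_one_eq_sum_moebius [Nonempty ι] (m : ℕ) :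
    (gcdCount ι m 1 : ℤ) = ∑ d ∈ Icc 1 m, μ d * ((m / d : ℕ) : ℤ) ^ Fintype.card ι := by
  have hdivisors : ∀ x ∈ Fintype.piFinset fun _ : ι => Icc 1 m,
      (univ.gcd x).divisors = {d ∈ Icc 1 m | d ∣ univ.gcd x} := by
    intro x hx
    have hg := mem_Icc.mp (gcd_mem_Icc_of_mem_piFinset hx)
    ext d
    simp only [Nat.mem_divisors, mem_filter, mem_Icc]
    constructor
    · rintro ⟨hd, -⟩
      exact ⟨⟨Nat.pos_of_dvd_of_pos hd hg.1, (Nat.le_of_dvd hg.1 hd).trans hg.2⟩, hd⟩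
    · rintro ⟨-, hd⟩
      exact ⟨hd, by omega⟩
  calc (gcdCount ι m 1 : ℤ)
      = ∑ x ∈ Fintype.piFinset fun _ : ι => Icc 1 m, ∑ d ∈ (univ.gcd x).divisors, μ d := by
        simp only [gcdCount, card_filter, sum_divisors_moebius]
        push_cast
        rfl
    _ = ∑ d ∈ Icc 1 m, ∑ x ∈ Fintype.piFinset fun _ : ι => Icc 1 m,
          if d ∣ univ.gcd x then μ d else 0 := by
        rw [sum_comm]
        refine sum_congr rfl fun x hx => ?_
        rw [hdivisors x hx, sum_filter]
    _ = ∑ d ∈ Icc 1 m, μ d * ((m / d : ℕ) : ℤ) ^ Fintype.card ι := by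
        refine sum_congr rfl fun d _ => ?_
        have hdvd : {x ∈ Fintype.piFinset fun _ : ι => Icc 1 m | d ∣ univ.gcd x} =
            {x ∈ Fintype.piFinset fun _ : ι => Icc 1 m | ∀ i, d ∣ x i} :=
          filter_congr fun x _ => by simp [Finset.dvd_gcd_iff]
        rw [← sum_filter, sum_const, hdvd, card_filter_forall_dvd_piFinset_Icc, nsmul_eq_mul,
          Nat.cast_pow, mul_comm]

theorem gcdCount_eq_gcdCount_div {j : ℕ} (hj : j ≠ 0) (n : ℕ) :
    gcdCount ι n j = gcdCount ι (n / j) 1 := by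
  have gcd_mul_const (y : ι → ℕ) : univ.gcd (fun i => j * y i) = j * univ.gcd y := by
    simpa using gcd_mul_left (s := univ) (f := y) (a := j)
  refine card_nbij' (fun x i => x i / j) (fun y i => j * y i) ?_ ?_ ?_ ?_
  · intro x hx
    simp only [mem_coe, mem_filter, Fintype.mem_piFinset, mem_Icc] at hx ⊢
    obtain ⟨hmem, hgcd⟩ := hx
    have hdvd (i : ι) : j ∣ x i := hgcd ▸ gcd_dvd (mem_univ i)
    refine ⟨fun i => ⟨?_, Nat.div_le_div_right (hmem i).2⟩, ?_⟩
    · exact (Nat.one_le_div_iff (by omega)).mpr (Nat.le_of_dvd (hmem i).1 (hdvd i))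
    · have hx : (fun i => j * (x i / j)) = x := funext fun i => Nat.mul_div_cancel' (hdvd i)
      have := gcd_mul_const fun i => x i / j
      rw [hx, hgcd] at this
      simpa [hj] using this.symm
  · intro y hy
    simp only [mem_coe, mem_filter, Fintype.mem_piFinset, mem_Icc] at hy ⊢
    obtain ⟨hmem, hgcd⟩ := hy
    refine ⟨fun i => ⟨?_, ?_⟩, by rw [gcd_mul_const, hgcd, mul_one]⟩
    · exact Nat.mul_pos (by omega) (hmem i).1
    · rw [mul_comm]
      exact (Nat.le_div_iff_mul_le (by omega)).mp (hmem i).2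
  · intro x hx
    simp only [mem_coe, mem_filter] at hx
    funext i
    exact Nat.mul_div_cancel' (hx.2 ▸ gcd_dvd (mem_univ i))
  · intro y _
    funext i
    exact Nat.mul_div_cancel_left _ (by omega)

theorem gcdCount_one_div_pow_eq_tsum (hs : Fintype.card ι ≠ 0) (m : ℕ) :
    (gcdCount ι m 1 : ℂ) / (m : ℂ) ^ Fintype.card ι =
      ∑' d, (μ d : ℂ) * (((m / d : ℕ) : ℂ) / m) ^ Fintype.card ι := by
  have : Nonempty ι := Fintype.card_pos_iff.mp (Nat.pos_of_ne_zero hs)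
  have hvanish : ∀ d ∉ Icc 1 m, (μ d : ℂ) * (((m / d : ℕ) : ℂ) / m) ^ Fintype.card ι = 0 := by
    intro d hd
    rcases Nat.eq_zero_or_pos d with rfl | hd0
    · simp
    · rw [Nat.div_eq_of_lt (by simp at hd; omega)]
      simp [hs]
  rw [tsum_eq_sum hvanish]
  have := congr(($(gcdCount_one_eq_sum_moebius (ι := ι) m) : ℂ))
  simp only [Int.cast_natCast, Int.cast_sum, Int.cast_mul, Int.cast_pow] at this
  rw [this, sum_div]
  refine sum_congr rfl fun d _ => ?_
  rw [div_pow, mul_div_assoc]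

theorem tendsto_gcdCount_one_div_pow (hs : 2 ≤ Fintype.card ι) :
    Tendsto (fun m : ℕ => (gcdCount ι m 1 : ℂ) / (m : ℂ) ^ Fintype.card ι) atTop
      (𝓝 (riemannZeta (Fintype.card ι))⁻¹) := by
  have hs_re : 1 < (Fintype.card ι : ℂ).re := by rw [Complex.natCast_re]; exact_mod_cast hs
  rw [← LSeries_moebius_eq_inv_riemannZeta hs_re, LSeries]
  refine Tendsto.congr (fun m => (gcdCount_one_div_pow_eq_tsum (by omega) m).symm) ?_
  set s := Fintype.card ι
  have htermwise (d : ℕ) : Tendsto (fun m : ℕ => (μ d : ℂ) * (((m / d : ℕ) : ℂ) / m) ^ s)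
      atTop (𝓝 (LSeries.term ↗μ s d)) := by
    rcases eq_or_ne d 0 with rfl | hd
    · simp
    have := (((Complex.continuous_ofReal.tendsto _).comp
      (tendsto_natCast_div_div d)).pow s).const_mul (μ d : ℂ)
    rw [LSeries.term_of_ne_zero hd, Complex.cpow_natCast]
    convert this using 2 with m
    · simp
    · push_cast
      rw [one_div_pow, mul_one_div]
  have hbound (m d : ℕ) : ‖(μ d : ℂ) * (((m / d : ℕ) : ℂ) / m) ^ s‖ ≤ 1 / (d : ℝ) ^ s := by
    rw [norm_mul, norm_pow, norm_div, Complex.norm_intCast, Complex.norm_natCast,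
      Complex.norm_natCast, ← one_mul (1 / _), ← one_div_pow]
    gcongr ?_ * ?_ ^ s
    · exact_mod_cast abs_moebius_le_one
    · exact natCast_div_div_le_one_div m d
  exact tendsto_tsum_of_dominated_convergence (Real.summable_one_div_nat_pow.mpr (by omega))
    htermwise (.of_forall hbound)

end

/-- The probability that the gcd of `s ≥ 2` uniform random elements of `{1,…,n}`
equals `j` converges to `1/(ζ(s) j^s)`. -/
theorem gcd_tuple_tendsto_zeta (s : ℕ) (hs : 2 ≤ s) (j : ℕ) (hj : 1 ≤ j) :
    Tendsto (fun n : ℕ =>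
        (((Finset.filter (fun x : Fin s → ℕ => Finset.univ.gcd x = j)
            (Fintype.piFinset fun _ : Fin s => Finset.Icc 1 n)).card : ℝ) / (n : ℝ) ^ s : ℂ))
      atTop (nhds (1 / (riemannZeta s * (j : ℂ) ^ s))) := by
  change Tendsto (fun n : ℕ => ((gcdCount (Fin s) n j : ℝ) / (n : ℝ) ^ s : ℂ)) atTop _
  have hj0 : j ≠ 0 := by omega
  have hcoprime : Tendsto (fun n => (gcdCount (Fin s) (n / j) 1 : ℂ) / ((n / j : ℕ) : ℂ) ^ s)
      atTop (𝓝 (riemannZeta s)⁻¹) := by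
    have h := tendsto_gcdCount_one_div_pow (ι := Fin s) (by rwa [Fintype.card_fin])
    rw [Fintype.card_fin] at h
    exact h.comp (Nat.tendsto_div_const_atTop hj0)
  have hscale : Tendsto (fun n : ℕ => (((n / j : ℕ) : ℂ) / n) ^ s) atTop (𝓝 ((1 / j) ^ s)) := by
    simpa using ((Complex.continuous_ofReal.tendsto _).comp (tendsto_natCast_div_div j)).pow s
  have hlim : (riemannZeta s)⁻¹ * (1 / (j : ℂ)) ^ s = 1 / (riemannZeta s * (j : ℂ) ^ s) := by
    rw [one_div_pow, one_div, one_div, mul_inv]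
  rw [← hlim]
  refine (hcoprime.mul hscale).congr' ?_
  filter_upwards [eventually_ge_atTop j] with n hn
  have hnj : ((n / j : ℕ) : ℂ) ≠ 0 := Nat.cast_ne_zero.mpr (Nat.div_pos hn (by omega)).ne'
  rw [gcdCount_eq_gcdCount_div hj0]
  push_cast
  field_simp
  ring
end

section
/- Let s ≥ 1 and let G_{p,1},...,G_{p,s} (indexed over primes p) be mutually independent random variables with P(G_{p,k} ≥ j) = p^{-j} for all j ≥ 0. If s ≥ 2, then the random product ∏_p p^{min(G_{p,1},...,G_{p,s})} is almost surely finite, and its distribution is given by P(∏_p p^{min_k G_{p,k}} = j) = 1/(ζ(s) j^s) for every j ∈ ℕ. -/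
open MeasureTheory ProbabilityTheory Filter Topology
open scoped ENNReal NNReal

/-!
The minimum `M p` of `s` independent geometric variables of ratio `1/p` is geometric of ratio
`p^{-s}`, and the `M p` are independent across primes. Since `∑ p^{-s} < ∞`, Borel–Cantelli
makes `M p = 0` for all but finitely many `p` almost surely. By unique factorisation,
`∏ p^{M p} = j` exactly when `M p = v_p(j)` for every `p`, an event of probability
`∏_p (1 - p^{-s}) p^{-s v_p(j)} = j^{-s} / ζ(s)` by independence and the Euler product.
-/

namespace ProbabilityTheory

variable {Ω ι κ β : Type*} {mΩ : MeasurableSpace Ω} {μ : Measure Ω}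

lemma iIndepFun.curry [MeasurableSpace β] {X : ι × κ → Ω → β} (hX : ∀ i, Measurable (X i))
    (h : iIndepFun X μ) : iIndepFun (fun i ω j ↦ X (i, j) ω) μ := by
  have := h.isProbabilityMeasure
  have hσ : iIndepFun (fun p : (_ : ι) × κ ↦ X (p.1, p.2)) μ :=
    h.precomp (Equiv.sigmaEquivProd ι κ).injective
  have hblock (i : ι) :
      μ.map (fun ω j ↦ X (i, j) ω) = Measure.infinitePi fun j ↦ μ.map (X (i, j)) :=
    (iIndepFun_iff_map_fun_eq_infinitePi_map (fun _ ↦ hX _)).1 <|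
      h.precomp (Prod.mk_right_injective i)
  rw [iIndepFun_iff_map_fun_eq_infinitePi_map (fun _ ↦ hX _)] at hσ
  rw [iIndepFun_iff_map_fun_eq_infinitePi_map (fun _ ↦ by fun_prop)]
  simp_rw [hblock]
  have (i : ι) (j : κ) := Measure.isProbabilityMeasure_map (μ := μ) (hX (i, j)).aemeasurable
  rw [← Measure.infinitePi_map_piCurry (μ := fun i j ↦ μ.map (X (i, j))), ← hσ,
    Measure.map_map (by fun_prop) (by fun_prop)]
  rfl

lemma iIndepFun.hasProd_measureReal_iInter [Countable ι] {β : ι → Type*}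
    {mβ : ∀ i, MeasurableSpace (β i)} {X : (i : ι) → Ω → β i} (hX : ∀ i, Measurable (X i))
    (h : iIndepFun X μ) {S : (i : ι) → Set (β i)} (hS : ∀ i, MeasurableSet (S i)) :
    HasProd (fun i ↦ μ.real (X i ⁻¹' S i)) (μ.real (⋂ i, X i ⁻¹' S i)) := by
  have := h.isProbabilityMeasure
  have hfinite : Tendsto (fun F : Finset ι ↦ μ (⋂ i ∈ F, X i ⁻¹' S i)) atTop
      (𝓝 (μ (⋂ i, X i ⁻¹' S i))) := by
    rw [Set.iInter_eq_iInter_finset]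
    exact tendsto_measure_iInter_atTop
      (fun F ↦ (F.measurableSet_biInter fun i _ ↦ hX i (hS i)).nullMeasurableSet)
      (fun F G hFG ↦ Set.biInter_subset_biInter_left hFG) ⟨∅, measure_ne_top μ _⟩
  refine ((ENNReal.tendsto_toReal (measure_ne_top μ _)).comp hfinite).congr fun F ↦ ?_
  simp only [Function.comp_apply, h.meas_biInter fun i _ ↦ ⟨S i, hS i, rfl⟩,
    ENNReal.toReal_prod, measureReal_def]

lemma iIndepFun.measure_le_iInf [Fintype ι] [Nonempty ι] {X : ι → Ω → ℕ}
    (h : iIndepFun X μ) (j : ℕ) :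
    μ {ω | j ≤ ⨅ i, X i ω} = ∏ i, μ {ω | j ≤ X i ω} := by
  have hset : {ω | j ≤ ⨅ i, X i ω} = ⋂ i, X i ⁻¹' Set.Ici j := by
    ext ω; simp [le_ciInf_iff']
  rw [hset, h.meas_iInter fun i ↦ ⟨Set.Ici j, measurableSet_Ici, rfl⟩]
  rfl

end ProbabilityTheory

lemma measureReal_eq_of_measure_le_eq_pow {Ω : Type*} {mΩ : MeasurableSpace Ω} {μ : Measure Ω}
    [IsFiniteMeasure μ] {X : Ω → ℕ} (hX : Measurable X) {r : ℝ≥0∞}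
    (h : ∀ j, μ {ω | j ≤ X ω} = r ^ j) (a : ℕ) :
    μ.real {ω | X ω = a} = (1 - r.toReal) * r.toReal ^ a := by
  have hdiff : {ω | X ω = a} = {ω | a ≤ X ω} \ {ω | a + 1 ≤ X ω} := by
    ext ω; simp only [Set.mem_ofPred_eq, Set.mem_sdiff]; omega
  have hsub : {ω | a + 1 ≤ X ω} ⊆ {ω | a ≤ X ω} := fun ω hω ↦ (Nat.le_succ a).trans hω
  rw [hdiff, measureReal_sdiff hsub (hX measurableSet_Ici), measureReal_def, measureReal_def, h, h,
    ENNReal.toReal_pow, ENNReal.toReal_pow]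
  ring

namespace Nat

variable {m : {q : ℕ // q.Prime} → ℕ}

lemma factorization_finprod_primes_pow (hm : (Function.support m).Finite)
    (q : {q : ℕ // q.Prime}) :
    (∏ᶠ p : {q : ℕ // q.Prime}, (p : ℕ) ^ m p).factorization q = m q := by
  classical
  have hsupp : Function.mulSupport (fun p : {q : ℕ // q.Prime} ↦ (p : ℕ) ^ m p) ⊆
      hm.toFinset := by
    intro p hp
    simp only [Set.Finite.coe_toFinset, Function.mem_support]
    rintro h
    simp [h] at hp
  rw [finprod_eq_prod_of_mulSupport_subset _ hsupp,
    factorization_prod fun p _ ↦ pow_ne_zero _ p.2.ne_zero, Finsupp.finsetSum_apply]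
  simp_rw [fun p : {q : ℕ // q.Prime} ↦ p.2.factorization_pow, Finsupp.single_apply,
    Subtype.val_inj]
  rw [Finset.sum_ite_eq']
  split_ifs with hq
  · rfl
  · simpa [eq_comm] using hq

lemma finprod_primes_pow_ne_zero (m : {q : ℕ // q.Prime} → ℕ) :
    ∏ᶠ p : {q : ℕ // q.Prime}, (p : ℕ) ^ m p ≠ 0 :=
  finprod_induction (· ≠ 0) one_ne_zero (fun _ _ ↦ mul_ne_zero) fun p ↦ pow_ne_zero _ p.2.ne_zero

lemma finprod_primes_pow_eq_iff (hm : (Function.support m).Finite) {n : ℕ} (hn : n ≠ 0) :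
    ∏ᶠ p : {q : ℕ // q.Prime}, (p : ℕ) ^ m p = n ↔ ∀ p, m p = n.factorization p := by
  constructor
  · rintro rfl p
    exact (factorization_finprod_primes_pow hm p).symm
  · intro h
    refine eq_of_factorization_eq (finprod_primes_pow_ne_zero m) hn fun q ↦ ?_
    by_cases hq : q.Prime
    · exact (factorization_finprod_primes_pow hm ⟨q, hq⟩).trans (h ⟨q, hq⟩)
    · simp [factorization_eq_zero_of_not_prime _ hq]

lemma hasProd_primes_pow_factorization {n : ℕ} (hn : n ≠ 0) :
    HasProd (fun p : {q : ℕ // q.Prime} ↦ (p : ℕ) ^ n.factorization p) n := by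
  have hfin : (Function.support fun p : {q : ℕ // q.Prime} ↦ n.factorization p).Finite :=
    n.factorization.hasFiniteSupport.preimage Subtype.val_injective.injOn
  have hmul : (Function.mulSupport fun p : {q : ℕ // q.Prime} ↦
      (p : ℕ) ^ n.factorization p).Finite :=
    hfin.subset fun p hp h ↦ hp (by simp [h])
  have hprod := (multipliable_of_hasFiniteMulSupport (L := .unconditional _) hmul).hasProd
  rwa [tprod_eq_finprod hmul, (finprod_primes_pow_eq_iff hfin hn).2 fun _ ↦ rfl] at hprod

end Nat

lemma tsum_primes_inv_pow_ne_top {s : ℕ} (hs : 1 < s) :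
    ∑' p : {q : ℕ // q.Prime}, ((p : ℝ≥0∞)⁻¹) ^ s ≠ ∞ := by
  have hsum : Summable fun p : {q : ℕ // q.Prime} ↦ ((p : ℝ≥0)⁻¹) ^ s := by
    rw [← NNReal.summable_coe]
    push_cast
    exact ((Real.summable_nat_pow_inv.2 hs).comp_injective Subtype.val_injective).congr
      fun p ↦ by simp [inv_pow]
  convert ENNReal.tsum_coe_ne_top_iff_summable.2 hsum using 3 with p
  rw [ENNReal.coe_pow, ENNReal.coe_inv (by simpa using p.2.ne_zero)]
  rfl

lemma hasProd_one_sub_inv_pow_riemannZeta {s : ℕ} (hs : 1 < s) :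
    HasProd (fun p : {q : ℕ // q.Prime} ↦ 1 - ((p : ℂ) ^ s)⁻¹) (riemannZeta s)⁻¹ := by
  have hre : 1 < (s : ℂ).re := by simpa using hs
  have heuler := (riemannZeta_eulerProduct_hasProd hre).inv₀ (riemannZeta_ne_zero_of_one_lt_re hre)
  simp only [Complex.cpow_neg, Complex.cpow_natCast, inv_inv] at heuler
  exact heuler

section PrimePowerProduct

variable {Ω : Type*} {mΩ : MeasurableSpace Ω} {μ : Measure Ω} {s : ℕ}
  {M : {q : ℕ // q.Prime} → Ω → ℕ}

lemma ae_finite_setOf_pos_of_measure_le_eq_pow (hs : 1 < s)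
    (hgeom : ∀ p j, μ {ω | j ≤ M p ω} = ((p : ℝ≥0∞)⁻¹ ^ s) ^ j) :
    ∀ᵐ ω ∂μ, {p | 0 < M p ω}.Finite :=
  ae_finite_setOfPred_mem (s := fun p ↦ {ω | 1 ≤ M p ω}) <| by
    simpa only [hgeom, pow_one] using tsum_primes_inv_pow_ne_top hs

lemma ofReal_measureReal_eq_of_measure_le_eq_inv_pow [IsFiniteMeasure μ]
    (hM : ∀ p, Measurable (M p))
    (hgeom : ∀ p j, μ {ω | j ≤ M p ω} = ((p : ℝ≥0∞)⁻¹ ^ s) ^ j) (p : {q : ℕ // q.Prime})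
    (a : ℕ) : (μ.real {ω | M p ω = a} : ℂ) = (1 - ((p : ℂ) ^ s)⁻¹) * ((p : ℂ) ^ s)⁻¹ ^ a := by
  rw [measureReal_eq_of_measure_le_eq_pow (hM p) (hgeom p)]
  simp

lemma measureReal_forall_eq_factorization (hs : 1 < s) (hM : ∀ p, Measurable (M p))
    (hindep : iIndepFun M μ) (hgeom : ∀ p j, μ {ω | j ≤ M p ω} = ((p : ℝ≥0∞)⁻¹ ^ s) ^ j)
    {n : ℕ} (hn : n ≠ 0) :
    (μ.real {ω | ∀ p, M p ω = n.factorization p} : ℂ) = (riemannZeta s)⁻¹ * ((n : ℂ) ^ s)⁻¹ := by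
  have := hindep.isProbabilityMeasure
  have hevent := (hindep.hasProd_measureReal_iInter hM (S := fun p ↦ {n.factorization p})
    fun _ ↦ measurableSet_singleton _).map Complex.ofRealHom Complex.continuous_ofReal
  let φ : ℕ →* ℂ := invMonoidHom.comp ((powMonoidHom s).comp (Nat.castRingHom ℂ : ℕ →* ℂ))
  have hfactors := (hasProd_one_sub_inv_pow_riemannZeta hs).mul
    ((Nat.hasProd_primes_pow_factorization hn).map φ continuous_of_discreteTopology)
  have hT : {ω | ∀ p, M p ω = n.factorization p} = ⋂ p, M p ⁻¹' {n.factorization p} := by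
    ext; simp
  rw [hT]
  refine hevent.unique (hfactors.congr_fun fun p ↦ ?_)
  simp only [Function.comp_apply, Complex.ofRealHom_eq_coe, Set.preimage, Set.mem_singleton_iff,
    ofReal_measureReal_eq_of_measure_le_eq_inv_pow hM hgeom, φ, MonoidHom.coe_comp,
    coe_invMonoidHom, MonoidHom.coe_coe, Nat.coe_castRingHom, Nat.cast_pow, powMonoidHom_apply]
  ring

lemma measureReal_finprod_pow_eq (hs : 1 < s) (hM : ∀ p, Measurable (M p))
    (hindep : iIndepFun M μ) (hgeom : ∀ p j, μ {ω | j ≤ M p ω} = ((p : ℝ≥0∞)⁻¹ ^ s) ^ j)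
    {n : ℕ} (hn : n ≠ 0) :
    (μ.real {ω | ∏ᶠ p : {q : ℕ // q.Prime}, (p : ℕ) ^ M p ω = n} : ℂ) =
      1 / (riemannZeta s * (n : ℂ) ^ s) := by
  have hae : {ω | ∏ᶠ p : {q : ℕ // q.Prime}, (p : ℕ) ^ M p ω = n}
      =ᵐ[μ] {ω | ∀ p, M p ω = n.factorization p} := by
    filter_upwards [ae_finite_setOf_pos_of_measure_le_eq_pow hs hgeom] with ω hfin
    exact propext <| Nat.finprod_primes_pow_eq_iff (hfin.subset fun _ ↦ Nat.pos_of_ne_zero) hn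
  rw [measureReal_congr hae, measureReal_forall_eq_factorization hs hM hindep hgeom hn, one_div,
    mul_inv]

end PrimePowerProduct

theorem prod_pow_min_geometric_distribution_general
    (s : ℕ) (hs : 2 ≤ s)
    (Ω : Type*) [MeasurableSpace Ω] (μ : Measure Ω)
    (G : {q : ℕ // q.Prime} × Fin s → Ω → ℕ)
    (hmeas : ∀ pk, Measurable (G pk))
    (hindep : iIndepFun G μ)
    (hgeom : ∀ pk : {q : ℕ // q.Prime} × Fin s, ∀ j : ℕ,
        μ {ω | j ≤ G pk ω} = ((pk.1.1 : ENNReal))⁻¹ ^ j) :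
    (∀ᵐ ω ∂μ, {p : {q : ℕ // q.Prime} |
        0 < sInf (Set.range fun k : Fin s => G (p, k) ω)}.Finite) ∧
    (∀ j : ℕ, 1 ≤ j →
      ((μ {ω | ∏ᶠ p : {q : ℕ // q.Prime},
            (p : ℕ) ^ sInf (Set.range fun k : Fin s => G (p, k) ω) = j}).toReal : ℂ)
          = 1 / (riemannZeta s * (j : ℂ) ^ s)) := by
  -- `⨅ k, G (p, k) ω` unfolds to the `sInf (Set.range _)` of the statement.
  set M : {q : ℕ // q.Prime} → Ω → ℕ := fun p ω ↦ ⨅ k, G (p, k) ω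
  have : Nonempty (Fin s) := ⟨⟨0, by omega⟩⟩
  have hM (p) : Measurable (M p) := Measurable.iInf fun k ↦ hmeas (p, k)
  have hMindep : iIndepFun M μ :=
    (hindep.curry hmeas).comp (fun _ v ↦ ⨅ k, v k) fun _ ↦ measurable_of_countable _
  have hMgeom (p j) : μ {ω | j ≤ M p ω} = ((p : ℝ≥0∞)⁻¹ ^ s) ^ j := by
    rw [(hindep.precomp (Prod.mk_right_injective p)).measure_le_iInf]
    simp [hgeom, ← pow_mul, mul_comm]
  exact ⟨ae_finite_setOf_pos_of_measure_le_eq_pow hs hMgeom,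
    fun j hj ↦ measureReal_finprod_pow_eq hs hM hMindep hMgeom (by omega)⟩

/-- If `G_{p,k}` (`p` prime, `1 ≤ k ≤ s`, `s ≥ 2`) are mutually independent geometric
random variables with `P(G_{p,k} ≥ j) = p^{-j}`, then `∏_p p^{min_k G_{p,k}}` is a.s.
finite (only finitely many factors are non-trivial) and is distributed as
`P(∏_p p^{min_k G_{p,k}} = j) = 1/(ζ(s) j^s)`. -/
theorem prod_pow_min_geometric_distribution
    (s : ℕ) (hs : 2 ≤ s)
    (Ω : Type*) [MeasurableSpace Ω] (μ : Measure Ω) [IsProbabilityMeasure μ]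
    (G : {q : ℕ // q.Prime} × Fin s → Ω → ℕ)
    (hmeas : ∀ pk, Measurable (G pk))
    (hindep : iIndepFun G μ)
    (hgeom : ∀ pk : {q : ℕ // q.Prime} × Fin s, ∀ j : ℕ,
        μ {ω | j ≤ G pk ω} = ((pk.1.1 : ENNReal))⁻¹ ^ j) :
    (∀ᵐ ω ∂μ, {p : {q : ℕ // q.Prime} |
        0 < sInf (Set.range fun k : Fin s => G (p, k) ω)}.Finite) ∧
    (∀ j : ℕ, 1 ≤ j →
      ((μ {ω | ∏ᶠ p : {q : ℕ // q.Prime},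
            (p : ℕ) ^ sInf (Set.range fun k : Fin s => G (p, k) ω) = j}).toReal : ℂ)
          = 1 / (riemannZeta s * (j : ℂ) ^ s)) :=
  prod_pow_min_geometric_distribution_general s hs Ω μ G hmeas hindep hgeom
end
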